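/- Let μ be a probability distribution on ℝ^m × {−1, +1} whose input marginal is c-isoperimetric (for every L-Lipschitz f and t > 0, P(|f(x) − E_μ[f]| ≥ t) ≤ 2 exp(−m t²/(2 c L²))). Let g(x) = E[y | x], z(x, y) = y − g(x), σ² = E[z²]. Let (x_1, y_1), …, (x_n, y_n) be i.i.d. samples from μ. Let ℱ be a finite family of L-Lipschitz functions f : ℝ^m → [−1, 1], ε ≥ 0, C ≥ 0, and ζ ≥ 0 such that every f ∈ ℱ satisfies the bandwidth condition [f(x) − ζ, f(x) + ζ] ⊆ { f(x + Δ) : ‖Δ‖ ≤ ε } for all x. Set γ = σ² + ζ² − C and assume γ ≥ 0. Then P( ∃ f ∈ ℱ : (1/n) Σ_{i=1}^n sup_{‖Δ‖≤ε} (f(x_i + Δ) − y_i)² ≤ C ) ≤ 4 exp( − n γ² / 2⁹ ) + 2 |ℱ| exp( − n m γ² / (2¹² c L²) ). -/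

import Mathlib

open MeasureTheory
open scoped BigOperators ENNReal

/-- `g(x) = E[y | x]`, realized as the conditional expectation of the label (the second
coordinate) with respect to the σ-algebra generated by the input (the first coordinate). -/
noncomputable def condMean {E : Type*} [MeasurableSpace E]
    (μ : Measure (E × ℝ)) : E × ℝ → ℝ :=
  MeasureTheory.condExp (MeasurableSpace.comap Prod.fst inferInstance) μ (fun q => q.2)

/-- `σ² = E[z²] = E[Var(y | x)]` where `z = y − g(x)` is the label noise. -/
noncomputable def condNoiseVar {E : Type*} [MeasurableSpace E]
    (μ : Measure (E × ℝ)) : ℝ :=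
  ∫ q, (q.2 - condMean μ q) ^ 2 ∂μ


open Real Set
open Filter hiding map

section AuxLemmas

-- scalar inequality for the subgaussian mgf bound
lemma aux_scalar (u : ℝ) (hu : 0 ≤ u) :
    1 + 2*u^2*Real.exp (u^2/2) + Real.sqrt (2*Real.pi) * u * (Real.exp (u^2/2) - 1) ≤
      Real.exp (4*u^2) := by
  have hE1 : (1:ℝ) ≤ Real.exp (u^2/2) := Real.one_le_exp (by positivity)
  have hE0 : (0:ℝ) < Real.exp (u^2/2) := Real.exp_pos _
  have hsqrt : Real.sqrt (2*Real.pi) ≤ 2.6 := by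
    have h1 : (2*Real.pi : ℝ) ≤ 6.76 := by nlinarith [Real.pi_lt_d2]
    have h2 : Real.sqrt (2*Real.pi) ≤ Real.sqrt 6.76 := Real.sqrt_le_sqrt h1
    have h3 : Real.sqrt 6.76 = 2.6 := by
      rw [show (6.76:ℝ) = 2.6^2 by norm_num, Real.sqrt_sq (by norm_num)]
    linarith
  have h2 : Real.exp (u^2/2) - 1 ≤ (u^2/2) * Real.exp (u^2/2) := by
    have h := Real.add_one_le_exp (-(u^2/2))
    rw [Real.exp_neg] at h
    have := mul_le_mul_of_nonneg_right h hE0.le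
    rw [inv_mul_cancel₀ hE0.ne'] at this
    nlinarith
  have h3 : (1 + 1.75*u^2)^2 ≤ Real.exp (3.5*u^2) := by
    have he : Real.exp (3.5*u^2) = Real.exp (1.75*u^2) ^ 2 := by
      rw [← Real.exp_nat_mul]; norm_num; ring_nf
    have h := Real.add_one_le_exp (1.75*u^2)
    rw [he]
    nlinarith [Real.exp_pos (1.75*u^2)]
  have h4 : Real.exp (4*u^2) = Real.exp (u^2/2) * Real.exp (3.5*u^2) := by
    rw [← Real.exp_add]; ring_nf
  have key : Real.sqrt (2*Real.pi) * u * (Real.exp (u^2/2) - 1) ≤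
      1.3 * u^3 * Real.exp (u^2/2) := by
    have hEm : (0:ℝ) ≤ Real.exp (u^2/2) - 1 := by linarith
    have : Real.sqrt (2*Real.pi) * u * (Real.exp (u^2/2) - 1) ≤ 2.6 * u * ((u^2/2) * Real.exp (u^2/2)) := by
      have a1 : Real.sqrt (2*Real.pi) * u ≤ 2.6 * u :=
        mul_le_mul_of_nonneg_right hsqrt hu
      have a0 : (0:ℝ) ≤ Real.sqrt (2*Real.pi) * u := by positivity
      calc Real.sqrt (2*Real.pi) * u * (Real.exp (u^2/2) - 1)
          ≤ (2.6 * u) * (Real.exp (u^2/2) - 1) := mul_le_mul_of_nonneg_right a1 hEm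
        _ ≤ (2.6 * u) * ((u^2/2) * Real.exp (u^2/2)) :=
            mul_le_mul_of_nonneg_left h2 (by positivity)
    nlinarith [this]
  have poly : 2*u^2 + 1.3*u^3 ≤ 3.5*u^2 + 3.0625*u^4 := by
    nlinarith [mul_nonneg (mul_nonneg hu hu) (sq_nonneg (u - 13/61)), sq_nonneg u, sq_nonneg (u - 13/61)]
  calc 1 + 2*u^2*Real.exp (u^2/2) + Real.sqrt (2*Real.pi) * u * (Real.exp (u^2/2) - 1)
      ≤ 1 + 2*u^2*Real.exp (u^2/2) + 1.3*u^3*Real.exp (u^2/2) := by linarith [key]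
    _ ≤ Real.exp (u^2/2) * (1 + 3.5*u^2 + 3.0625*u^4) := by nlinarith [poly, hE1, hE0]
    _ ≤ Real.exp (u^2/2) * Real.exp (3.5*u^2) := by nlinarith [h3, hE0]
    _ = Real.exp (4*u^2) := h4.symm


-- chord bound for exp on [-K,K]
lemma aux_chord {x K l : ℝ} (hx : |x| ≤ K) (hK : 0 < K) :
    Real.exp (l * x) ≤ Real.cosh (l*K) + (Real.sinh (l*K) / K) * x := by
  have hx1 : -K ≤ x := neg_le_of_abs_le hx
  have hx2 : x ≤ K := le_of_abs_le hx
  have ha : (0:ℝ) ≤ (K - x)/(2*K) := div_nonneg (by linarith) (by linarith)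
  have hb : (0:ℝ) ≤ (K + x)/(2*K) := div_nonneg (by linarith) (by linarith)
  have hab : (K - x)/(2*K) + (K + x)/(2*K) = 1 := by field_simp; ring
  have h := convexOn_exp.2 (Set.mem_univ (-(l*K))) (Set.mem_univ (l*K)) ha hb hab
  simp only [smul_eq_mul] at h
  have harg : (K - x)/(2*K) * (-(l*K)) + (K + x)/(2*K) * (l*K) = l * x := by
    field_simp; ring
  rw [harg] at h
  refine h.trans_eq ?_
  rw [Real.cosh_eq, Real.sinh_eq]
  field_simp
  ring

-- mgf of a centered bounded random variable
lemma aux_mgf_bounded {α : Type*} [MeasurableSpace α] (μ : Measure α) [IsProbabilityMeasure μ]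
    (X : α → ℝ) (hX : Measurable X) (K : ℝ) (hKb : ∀ᵐ a ∂μ, |X a| ≤ K)
    (hmean : ∫ a, X a ∂μ = 0) (l : ℝ) :
    ∫ a, Real.exp (l * X a) ∂μ ≤ Real.exp (l^2 * K^2 / 2) := by
  haveI : (ae μ).NeBot := ae_neBot.2 (IsProbabilityMeasure.ne_zero μ)
  have hK0 : 0 ≤ K := le_trans (abs_nonneg _) hKb.exists.choose_spec
  have hXint : Integrable X μ := by
    refine Integrable.mono' (integrable_const K) hX.aestronglyMeasurable ?_
    filter_upwards [hKb] with a ha; simpa using ha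
  have hEint : Integrable (fun a => Real.exp (l * X a)) μ := by
    refine Integrable.mono' (integrable_const (Real.exp (|l| * K)))
      (hX.const_mul l).exp.aestronglyMeasurable ?_
    filter_upwards [hKb] with a ha
    rw [Real.norm_eq_abs, abs_of_pos (Real.exp_pos _)]
    apply Real.exp_le_exp.2
    calc l * X a ≤ |l * X a| := le_abs_self _
      _ = |l| * |X a| := abs_mul _ _
      _ ≤ |l| * K := by exact mul_le_mul_of_nonneg_left ha (abs_nonneg l)
  rcases eq_or_lt_of_le hK0 with hK | hK
  · -- K = 0 : X = 0 a.e.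
    have hX0 : ∀ᵐ a ∂μ, Real.exp (l * X a) = 1 := by
      filter_upwards [hKb] with a ha
      have : X a = 0 := abs_nonpos_iff.mp (le_of_le_of_eq ha hK.symm)
      simp [this]
    rw [integral_congr_ae hX0]
    simp [Real.exp_nonneg, Real.one_le_exp_iff]
    positivity
  · have hpt : ∀ᵐ a ∂μ, Real.exp (l * X a) ≤
        Real.cosh (l*K) + (Real.sinh (l*K) / K) * X a := by
      filter_upwards [hKb] with a ha
      exact aux_chord ha hK
    have hint2 : Integrable (fun a => Real.cosh (l*K) + (Real.sinh (l*K) / K) * X a) μ :=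
      (integrable_const _).add (hXint.const_mul _)
    calc ∫ a, Real.exp (l * X a) ∂μ ≤ ∫ a, (Real.cosh (l*K) + (Real.sinh (l*K) / K) * X a) ∂μ :=
          integral_mono_ae hEint hint2 hpt
      _ = Real.cosh (l*K) := by
          rw [integral_add (integrable_const _) (hXint.const_mul _), integral_const,
            integral_const_mul, hmean]
          simp
      _ ≤ Real.exp ((l*K)^2/2) := Real.cosh_le_exp_half_sq _
      _ = Real.exp (l^2 * K^2 / 2) := by ring_nf


lemma aux_exp_phi_abs (y : ℝ) : Real.exp y - 1 - y ≤ Real.exp |y| - 1 - |y| := by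
  rcases le_or_gt 0 y with h | h
  · rw [abs_of_nonneg h]
  · rw [abs_of_neg h]
    have hy : 0 < -y := by linarith
    have hs : -y ≤ Real.sinh (-y) := (Real.self_lt_sinh_iff.2 hy).le
    rw [Real.sinh_eq] at hs
    have hs' : -y ≤ (Real.exp (-y) - Real.exp y) / 2 := by simpa using hs
    linarith

lemma aux_ftc (l : ℝ) (hl : 0 ≤ l) (b : ℝ) :
    ∫ t in (0:ℝ)..b, l * (Real.exp (l*t) - 1) = Real.exp (l*b) - 1 - l*b := by
  rcases eq_or_lt_of_le hl with h0 | hl'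
  · simp [← h0]
  · have h1 : (∫ t in (0:ℝ)..b, Real.exp (l*t)) = l⁻¹ • (Real.exp (l*b) - 1) := by
      rw [intervalIntegral.integral_comp_mul_left (f := fun t => Real.exp t) hl'.ne']
      rw [mul_zero, integral_exp]
      simp [Real.exp_zero]
    have hi1 : IntervalIntegrable (fun t => Real.exp (l*t)) volume 0 b :=
      (Real.continuous_exp.comp (continuous_const.mul continuous_id)).intervalIntegrable _ _
    have heq : (fun t => l * (Real.exp (l*t) - 1)) = fun t => l * Real.exp (l*t) - l := by
      funext t; ring
    rw [heq, intervalIntegral.integral_sub (hi1.const_mul l) intervalIntegrable_const,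
      intervalIntegral.integral_const_mul, h1, intervalIntegral.integral_const]
    have : l * (l⁻¹ • (Real.exp (l*b) - 1)) = Real.exp (l*b) - 1 := by
      rw [smul_eq_mul, ← mul_assoc, mul_inv_cancel₀ hl'.ne', one_mul]
    rw [this]
    simp only [smul_eq_mul, sub_zero]
    ring

lemma aux_gauss_base (s : ℝ) (hs : 0 < s) :
    ∫ t in Set.Ioi (0:ℝ), Real.exp (-(t^2/(2*s^2))) = Real.sqrt (2*Real.pi) * s / 2 := by
  have hb : (0:ℝ) < (2*s^2)⁻¹ := by positivity
  have heq : ∀ t : ℝ, Real.exp (-(t^2/(2*s^2))) = Real.exp (-((2*s^2)⁻¹ * t^2)) := by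
    intro t; congr 1; rw [div_eq_inv_mul]
  simp_rw [heq, show ∀ t:ℝ, -((2*s^2)⁻¹ * t^2) = -(2*s^2)⁻¹ * t^2 from fun t => by ring]
  rw [integral_gaussian_Ioi]
  rw [show Real.pi / (2*s^2)⁻¹ = (2*Real.pi) * s^2 by field_simp,
    Real.sqrt_mul (by positivity), Real.sqrt_sq hs.le]

lemma aux_gauss_integrable (s d : ℝ) (hs : 0 < s) :
    Integrable (fun t : ℝ => Real.exp (-((t - d)^2/(2*s^2)))) volume := by
  have hb : (0:ℝ) < (2*s^2)⁻¹ := by positivity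
  have h0 : Integrable (fun v : ℝ => Real.exp (-(2*s^2)⁻¹ * v^2)) volume :=
    integrable_exp_neg_mul_sq hb
  have := h0.comp_sub_right d
  refine this.congr ?_
  filter_upwards with t
  congr 1
  rw [div_eq_inv_mul]; ring

lemma aux_gauss_piece (s l : ℝ) (hs : 0 < s) (hl : 0 ≤ l) :
    ∫ t in Set.Ioi (0:ℝ), Real.exp (-((t - l*s^2)^2/(2*s^2))) ≤
      l*s^2 + Real.sqrt (2*Real.pi) * s / 2 := by
  set d := l*s^2 with hd
  have hd0 : 0 ≤ d := by positivity
  have hint : Integrable (fun t : ℝ => Real.exp (-((t - d)^2/(2*s^2)))) volume :=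
    aux_gauss_integrable s d hs
  have hsplit : Set.Ioi (0:ℝ) = Set.Ioc 0 d ∪ Set.Ioi d := (Set.Ioc_union_Ioi_eq_Ioi hd0).symm
  rw [hsplit, setIntegral_union (Set.Ioc_disjoint_Ioi le_rfl) measurableSet_Ioi
    hint.integrableOn hint.integrableOn]
  have h1 : ∫ t in Set.Ioc (0:ℝ) d, Real.exp (-((t - d)^2/(2*s^2))) ≤ d := by
    have hle : ∫ t in Set.Ioc (0:ℝ) d, Real.exp (-((t - d)^2/(2*s^2))) ≤
        ∫ _t in Set.Ioc (0:ℝ) d, (1:ℝ) := by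
      refine setIntegral_mono_on hint.integrableOn (integrableOn_const ?_)
        measurableSet_Ioc ?_
      · rw [Real.volume_Ioc]; exact ENNReal.ofReal_ne_top
      · intro t _ht
        exact Real.exp_le_one_iff.2 (by positivity |> neg_nonpos_of_nonneg)
    have : ∫ _t in Set.Ioc (0:ℝ) d, (1:ℝ) = d := by
      simp [Real.volume_Ioc, ENNReal.toReal_ofReal hd0, hd0]
    linarith
  have h2 : ∫ t in Set.Ioi d, Real.exp (-((t - d)^2/(2*s^2))) =
      Real.sqrt (2*Real.pi) * s / 2 := by
    rw [← aux_gauss_base s hs]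
    rw [← integral_indicator measurableSet_Ioi, ← integral_indicator measurableSet_Ioi]
    have : (Set.Ioi d).indicator (fun t => Real.exp (-((t - d)^2/(2*s^2)))) =
        fun t => (Set.Ioi (0:ℝ)).indicator (fun v => Real.exp (-(v^2/(2*s^2)))) (t - d) := by
      funext t
      by_cases ht : d < t
      · rw [Set.indicator_of_mem (Set.mem_Ioi.2 ht),
          Set.indicator_of_mem (Set.mem_Ioi.2 (by linarith : (0:ℝ) < t - d))]
      · rw [Set.indicator_of_notMem (by simpa using ht),
          Set.indicator_of_notMem (by simp; linarith [le_of_not_gt ht])]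
    rw [this, integral_sub_right_eq_self
      (fun v => (Set.Ioi (0:ℝ)).indicator (fun v => Real.exp (-(v^2/(2*s^2)))) v) d]
  linarith

lemma aux_mgf_subgaussian {α : Type*} [MeasurableSpace α] (μ : Measure α)
    [IsProbabilityMeasure μ] (X : α → ℝ) (hX : Measurable X)
    (M : ℝ) (hM : ∀ᵐ a ∂μ, |X a| ≤ M) (hmean : ∫ a, X a ∂μ = 0)
    (s : ℝ) (hs : 0 < s)
    (htail : ∀ t : ℝ, 0 < t → μ {a | t ≤ |X a|} ≤ ENNReal.ofReal (2 * Real.exp (-(t^2/(2*s^2)))))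
    (l : ℝ) (hl : 0 ≤ l) :
    ∫ a, Real.exp (l * X a) ∂μ ≤ Real.exp (4 * l^2 * s^2) := by
  haveI : (ae μ).NeBot := ae_neBot.2 (IsProbabilityMeasure.ne_zero μ)
  have hM0 : 0 ≤ M := le_trans (abs_nonneg _) hM.exists.choose_spec
  set d := l * s^2 with hd
  set u := l * s with hu
  have hu0 : 0 ≤ u := by positivity
  -- basic integrability
  have hXint : Integrable X μ := by
    refine Integrable.mono' (integrable_const M) hX.aestronglyMeasurable ?_
    filter_upwards [hM] with a ha; simpa using ha
  have hEmeas : Measurable fun a => Real.exp (l * X a) := (hX.const_mul l).exp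
  have hEint : Integrable (fun a => Real.exp (l * X a)) μ := by
    refine Integrable.mono' (integrable_const (Real.exp (l * M))) hEmeas.aestronglyMeasurable ?_
    filter_upwards [hM] with a ha
    rw [Real.norm_eq_abs, abs_of_pos (Real.exp_pos _)]
    apply Real.exp_le_exp.2
    calc l * X a ≤ |l * X a| := le_abs_self _
      _ = l * |X a| := by rw [abs_mul, abs_of_nonneg hl]
      _ ≤ l * M := mul_le_mul_of_nonneg_left ha hl
  -- Φf a = φ(l * |X a|)
  set Φf : α → ℝ := fun a => Real.exp (l * |X a|) - 1 - l * |X a| with hΦf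
  have hΦmeas : Measurable Φf := by
    apply Measurable.sub
    apply Measurable.sub ((hX.abs.const_mul l).exp) measurable_const
    exact hX.abs.const_mul l
  have hΦnn : ∀ a, 0 ≤ Φf a := fun a => by
    have := Real.add_one_le_exp (l * |X a|); simp only [hΦf]; linarith
  have hΦint : Integrable Φf μ := by
    refine Integrable.mono' (integrable_const (Real.exp (l*M))) hΦmeas.aestronglyMeasurable ?_
    filter_upwards [hM] with a ha
    rw [Real.norm_eq_abs, abs_of_nonneg (hΦnn a)]
    have h1 : l * |X a| ≤ l * M := mul_le_mul_of_nonneg_left ha hl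
    have h2 : Real.exp (l * |X a|) ≤ Real.exp (l * M) := Real.exp_le_exp.2 h1
    have h3 : 0 ≤ l * |X a| := by positivity
    simp only [hΦf]; linarith
  -- step 1 : mgf ≤ 1 + ∫ Φf
  have step1 : ∫ a, Real.exp (l * X a) ∂μ ≤ 1 + ∫ a, Φf a ∂μ := by
    have hpt : ∀ a, Real.exp (l * X a) ≤ 1 + l * X a + Φf a := by
      intro a
      have h := aux_exp_phi_abs (l * X a)
      rw [abs_mul, abs_of_nonneg hl] at h
      simp only [hΦf]; linarith
    have hint2 : Integrable (fun a => 1 + l * X a + Φf a) μ :=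
      ((integrable_const 1).add (hXint.const_mul l)).add hΦint
    calc ∫ a, Real.exp (l * X a) ∂μ ≤ ∫ a, (1 + l * X a + Φf a) ∂μ :=
          integral_mono hEint hint2 hpt
      _ = 1 + ∫ a, Φf a ∂μ := by
          have i1 : Integrable (fun a => 1 + l * X a) μ :=
            (integrable_const 1).add (hXint.const_mul l)
          have h1 : ∫ a, (1 + l * X a + Φf a) ∂μ =
              (∫ a, (1 + l * X a) ∂μ) + ∫ a, Φf a ∂μ := integral_add i1 hΦint
          have h2 : ∫ a, (1 + l * X a) ∂μ = 1 := by
            rw [integral_add (integrable_const 1) (hXint.const_mul l),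
              integral_const, integral_const_mul, hmean]
            simp
          rw [h1, h2]
  -- layer cake
  set g : ℝ → ℝ := fun t => l * (Real.exp (l*t) - 1) with hg
  have hgc : Continuous g := by
    apply Continuous.mul continuous_const
    exact ((Real.continuous_exp.comp (continuous_const.mul continuous_id)).sub continuous_const)
  have hgnn : ∀ t, 0 ≤ t → 0 ≤ g t := by
    intro t ht
    have : (1:ℝ) ≤ Real.exp (l*t) := Real.one_le_exp (by positivity)
    simp only [hg]; nlinarith
  have hlayer := lintegral_comp_eq_lintegral_meas_le_mul μ
    (f := fun a => |X a|) (g := g)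
    (Filter.Eventually.of_forall fun a => abs_nonneg _)
    hX.abs.aemeasurable
    (fun t _ht => (hgc.intervalIntegrable _ _))
    ((ae_restrict_iff' measurableSet_Ioi).2
      (Filter.Eventually.of_forall fun t ht => hgnn t (le_of_lt ht)))
  have hLHS : ∫⁻ a, ENNReal.ofReal (∫ t in (0:ℝ)..|X a|, g t) ∂μ =
      ENNReal.ofReal (∫ a, Φf a ∂μ) := by
    have : ∀ a, (∫ t in (0:ℝ)..|X a|, g t) = Φf a := fun a => aux_ftc l hl (|X a|)
    simp_rw [this]
    exact (ofReal_integral_eq_lintegral_ofReal hΦint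
      (Filter.Eventually.of_forall hΦnn)).symm
  -- bound the RHS of the layer cake formula
  set G0 : ℝ → ℝ := fun t => Real.exp (-(t^2/(2*s^2))) with hG0
  set I : ℝ := ∫ t in Set.Ioi (0:ℝ), (2 * G0 t) * g t with hI
  have hG0int : Integrable G0 volume := by
    have h := aux_gauss_integrable s 0 hs
    refine h.congr ?_
    filter_upwards with t; simp [hG0]
  have hG1int : Integrable (fun t => Real.exp (l*t) * G0 t) volume := by
    have h := (aux_gauss_integrable s d hs).const_mul (Real.exp (u^2/2))
    refine h.congr ?_
    filter_upwards with t
    rw [← Real.exp_add, hG0, ← Real.exp_add]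
    congr 1
    field_simp [hd, hu]
    ring
  have hprodint : IntegrableOn (fun t => (2 * G0 t) * g t) (Set.Ioi (0:ℝ)) volume := by
    have : Integrable (fun t => (2*l) * (Real.exp (l*t) * G0 t - G0 t)) volume :=
      (hG1int.sub hG0int).const_mul _
    refine (this.congr ?_).integrableOn
    filter_upwards with t
    simp only [hg, hG0]
    ring
  have hprodnn : ∀ t ∈ Set.Ioi (0:ℝ), 0 ≤ (2 * G0 t) * g t := by
    intro t ht
    have := hgnn t (le_of_lt ht)
    have : 0 ≤ G0 t := (Real.exp_pos _).le
    positivity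
  have hRHS : (∫⁻ t in Set.Ioi 0, μ {a | t ≤ |X a|} * ENNReal.ofReal (g t)) ≤
      ENNReal.ofReal I := by
    have hstep : (∫⁻ t in Set.Ioi 0, μ {a | t ≤ |X a|} * ENNReal.ofReal (g t)) ≤
        ∫⁻ t in Set.Ioi 0, ENNReal.ofReal ((2 * G0 t) * g t) := by
      refine lintegral_mono_ae ((ae_restrict_iff' measurableSet_Ioi).2
        (Filter.Eventually.of_forall fun t ht => ?_))
      have h1 := htail t ht
      have h2 : ENNReal.ofReal ((2 * G0 t) * g t) =
          ENNReal.ofReal (2 * G0 t) * ENNReal.ofReal (g t) :=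
        ENNReal.ofReal_mul (by have : 0 ≤ G0 t := (Real.exp_pos _).le; positivity)
      rw [h2]
      exact mul_le_mul_left (by simpa [hG0, mul_comm] using h1) _
    refine hstep.trans_eq ?_
    rw [hI]
    exact (ofReal_integral_eq_lintegral_ofReal hprodint
      ((ae_restrict_iff' measurableSet_Ioi).2
        (Filter.Eventually.of_forall hprodnn))).symm
  -- evaluate / bound I
  have hIbound : I ≤ 2*l * (Real.exp (u^2/2) * (d + Real.sqrt (2*Real.pi) * s / 2)
      - Real.sqrt (2*Real.pi) * s / 2) := by
    have hI2 : I = 2*l * ((∫ t in Set.Ioi (0:ℝ), Real.exp (l*t) * G0 t)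
        - ∫ t in Set.Ioi (0:ℝ), G0 t) := by
      rw [hI, ← integral_sub hG1int.integrableOn hG0int.integrableOn]
      rw [← integral_const_mul]
      congr 1
      funext t
      simp only [hg, hG0]
      ring
    have hG1val : (∫ t in Set.Ioi (0:ℝ), Real.exp (l*t) * G0 t) ≤
        Real.exp (u^2/2) * (d + Real.sqrt (2*Real.pi) * s / 2) := by
      have heq : ∀ t : ℝ, Real.exp (l*t) * G0 t =
          Real.exp (u^2/2) * Real.exp (-((t - d)^2/(2*s^2))) := by
        intro t
        rw [hG0, ← Real.exp_add, ← Real.exp_add]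
        congr 1
        field_simp [hd, hu]
        ring
      simp_rw [heq]
      rw [integral_const_mul]
      exact mul_le_mul_of_nonneg_left (aux_gauss_piece s l hs hl) (Real.exp_pos _).le
    have hG0val : (∫ t in Set.Ioi (0:ℝ), G0 t) = Real.sqrt (2*Real.pi) * s / 2 :=
      aux_gauss_base s hs
    rw [hI2, hG0val]
    have h2l : (0:ℝ) ≤ 2*l := by positivity
    nlinarith [hG1val]
  -- put everything together
  have hΦle : ∫ a, Φf a ∂μ ≤ I := by
    have h1 : ENNReal.ofReal (∫ a, Φf a ∂μ) ≤ ENNReal.ofReal I := by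
      rw [← hLHS, hlayer]; exact hRHS
    have hInn : 0 ≤ I :=
      setIntegral_nonneg measurableSet_Ioi hprodnn
    exact (ENNReal.ofReal_le_ofReal_iff hInn).1 h1
  have hfinal : 1 + (2*l * (Real.exp (u^2/2) * (d + Real.sqrt (2*Real.pi) * s / 2)
      - Real.sqrt (2*Real.pi) * s / 2)) =
      1 + 2*u^2*Real.exp (u^2/2) + Real.sqrt (2*Real.pi) * u * (Real.exp (u^2/2) - 1) := by
    simp only [hd, hu]; ring
  have := aux_scalar u hu0
  have h4 : Real.exp (4*u^2) = Real.exp (4*l^2*s^2) := by rw [hu]; ring_nf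
  linarith [step1, hΦle, hIbound]


lemma aux_chernoff_pi {α : Type*} [MeasurableSpace α] (μ : Measure α) [IsProbabilityMeasure μ]
    (n : ℕ) (X : α → ℝ) (hX : Measurable X) (M : ℝ) (hM : ∀ᵐ a ∂μ, |X a| ≤ M)
    (l B r : ℝ) (hl : 0 ≤ l) (hB : ∫ a, Real.exp (l * X a) ∂μ ≤ B) :
    Measure.pi (fun _ : Fin n => μ) {ω | r ≤ ∑ i, X (ω i)} ≤
      ENNReal.ofReal (Real.exp (-(l*r)) * B ^ n) := by
  letI : MeasureSpace α := ⟨μ⟩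
  haveI hsf : SigmaFinite (volume : Measure α) := by
    change SigmaFinite μ; infer_instance
  set ν := Measure.pi (fun _ : Fin n => μ) with hν
  haveI : IsProbabilityMeasure ν := by rw [hν]; infer_instance
  set G : (Fin n → α) → ℝ := fun ω => ∏ i, Real.exp (l * X (ω i)) with hG
  have hGmeas : Measurable G := by
    apply Finset.measurable_prod
    intro i _
    exact ((hX.comp (measurable_pi_apply i)).const_mul l).exp
  have hGnn : ∀ ω, 0 ≤ G ω := fun ω => Finset.prod_nonneg fun i _ => (Real.exp_pos _).le
  -- coordinatewise a.e. bound
  have hae : ∀ᵐ ω ∂ν, ∀ i, |X (ω i)| ≤ M := by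
    rw [MeasureTheory.ae_all_iff]
    intro i
    have hnull : μ {a | ¬ |X a| ≤ M} = 0 := hM
    have : ν (Function.eval i ⁻¹' {a | ¬ |X a| ≤ M}) = 0 :=
      MeasureTheory.Measure.pi_eval_preimage_null _ hnull
    exact this
  have hGint : Integrable G ν := by
    refine Integrable.mono' (integrable_const (Real.exp (l * M) ^ n))
      hGmeas.aestronglyMeasurable ?_
    filter_upwards [hae] with ω hω
    rw [Real.norm_eq_abs, abs_of_nonneg (hGnn ω)]
    calc G ω ≤ ∏ _i : Fin n, Real.exp (l * M) := by
          refine Finset.prod_le_prod (fun i _ => (Real.exp_pos _).le) fun i _ => ?_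
          apply Real.exp_le_exp.2
          calc l * X (ω i) ≤ |l * X (ω i)| := le_abs_self _
            _ = l * |X (ω i)| := by rw [abs_mul, abs_of_nonneg hl]
            _ ≤ l * M := mul_le_mul_of_nonneg_left (hω i) hl
      _ = Real.exp (l * M) ^ n := by rw [Finset.prod_const, Finset.card_univ, Fintype.card_fin]
  -- the event is contained in a sublevel set of G
  have hsub : {ω : Fin n → α | r ≤ ∑ i, X (ω i)} ⊆
      {ω | ENNReal.ofReal (Real.exp (l * r)) ≤ ENNReal.ofReal (G ω)} := by
    intro ω hω
    simp only [Set.mem_setOf_eq] at hω ⊢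
    apply ENNReal.ofReal_le_ofReal
    have : l * r ≤ l * ∑ i, X (ω i) := mul_le_mul_of_nonneg_left hω hl
    calc Real.exp (l * r) ≤ Real.exp (l * ∑ i, X (ω i)) := Real.exp_le_exp.2 this
      _ = Real.exp (∑ i, l * X (ω i)) := by rw [Finset.mul_sum]
      _ = G ω := Real.exp_sum _ _
  -- Markov
  have hmarkov := mul_meas_ge_le_lintegral₀
    (μ := ν) (f := fun ω => ENNReal.ofReal (G ω))
    (ENNReal.measurable_ofReal.comp hGmeas).aemeasurable
    (ENNReal.ofReal (Real.exp (l * r)))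
  have hGval : ∫ ω, G ω ∂ν = (∫ a, Real.exp (l * X a) ∂μ) ^ n := by
    have hvol : ν = (volume : Measure (Fin n → α)) := by
      rw [hν, MeasureTheory.volume_pi]
      rfl
    rw [hvol]
    simp only [hG]
    have := MeasureTheory.integral_fintype_prod_eq_pow (𝕜 := ℝ) (ι := Fin n)
      (f := fun a => Real.exp (l * X a)) (μ := (volume : Measure α))
    rw [MeasureTheory.volume_pi, this, Fintype.card_fin]
    rfl
  have hlint : ∫⁻ ω, ENNReal.ofReal (G ω) ∂ν = ENNReal.ofReal ((∫ a, Real.exp (l * X a) ∂μ) ^ n) := by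
    rw [← ofReal_integral_eq_lintegral_ofReal hGint (Filter.Eventually.of_forall hGnn), hGval]
  have hpos : (0:ℝ≥0∞) < ENNReal.ofReal (Real.exp (l * r)) :=
    ENNReal.ofReal_pos.2 (Real.exp_pos _)
  have h1 : ν {ω | r ≤ ∑ i, X (ω i)} ≤
      ENNReal.ofReal ((∫ a, Real.exp (l * X a) ∂μ) ^ n) / ENNReal.ofReal (Real.exp (l * r)) := by
    rw [← hlint]
    rw [ENNReal.le_div_iff_mul_le (Or.inl hpos.ne') (Or.inl ENNReal.ofReal_ne_top)]
    calc ν {ω | r ≤ ∑ i, X (ω i)} * ENNReal.ofReal (Real.exp (l * r))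
        ≤ ν {ω | ENNReal.ofReal (Real.exp (l * r)) ≤ ENNReal.ofReal (G ω)} *
          ENNReal.ofReal (Real.exp (l * r)) := by
          exact mul_le_mul_left (measure_mono hsub) _
      _ = ENNReal.ofReal (Real.exp (l * r)) *
          ν {ω | ENNReal.ofReal (Real.exp (l * r)) ≤ ENNReal.ofReal (G ω)} := mul_comm _ _
      _ ≤ ∫⁻ ω, ENNReal.ofReal (G ω) ∂ν := hmarkov
  refine h1.trans ?_
  have hBnn : 0 ≤ B := le_trans (integral_nonneg fun a => (Real.exp_pos _).le) hB
  have hintnn : 0 ≤ ∫ a, Real.exp (l * X a) ∂μ := integral_nonneg fun a => (Real.exp_pos _).le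
  have hpow : (∫ a, Real.exp (l * X a) ∂μ) ^ n ≤ B ^ n := pow_le_pow_left₀ hintnn hB n
  calc ENNReal.ofReal ((∫ a, Real.exp (l * X a) ∂μ) ^ n) / ENNReal.ofReal (Real.exp (l * r))
      ≤ ENNReal.ofReal (B ^ n) / ENNReal.ofReal (Real.exp (l * r)) := by
        exact ENNReal.div_le_div_right (ENNReal.ofReal_le_ofReal hpow) _
    _ = ENNReal.ofReal (B ^ n / Real.exp (l * r)) :=
        (ENNReal.ofReal_div_of_pos (Real.exp_pos _)).symm
    _ = ENNReal.ofReal (Real.exp (-(l*r)) * B ^ n) := by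
        rw [Real.exp_neg]
        congr 1
        field_simp

lemma aux_zero_integral {E : Type*} [MeasurableSpace E] (μ : Measure (E × ℝ))
    [IsProbabilityMeasure μ] (hlab : ∀ᵐ q ∂μ, q.2 = 1 ∨ q.2 = -1)
    (φ : E × ℝ → ℝ)
    (hφ : StronglyMeasurable[MeasurableSpace.comap Prod.fst inferInstance] φ)
    (b : ℝ) (hb : ∀ᵐ q ∂μ, |φ q| ≤ b) :
    ∫ q, (q.2 - condMean μ q) * φ q ∂μ = 0 := by
  haveI : (ae μ).NeBot := ae_neBot.2 (IsProbabilityMeasure.ne_zero μ)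
  set m' : MeasurableSpace (E × ℝ) := MeasurableSpace.comap Prod.fst inferInstance with hm'
  have hm0 : m' ≤ (Prod.instMeasurableSpace : MeasurableSpace (E × ℝ)) := measurable_fst.comap_le
  have hb0 : 0 ≤ b := le_trans (abs_nonneg _) hb.exists.choose_spec
  have hYb : ∀ᵐ q ∂μ, |q.2| ≤ 1 := by
    filter_upwards [hlab] with q hq
    rcases hq with h | h <;> simp [h]
  have hYint : Integrable (fun q : E × ℝ => q.2) μ := by
    refine Integrable.mono' (integrable_const 1) measurable_snd.aestronglyMeasurable ?_
    filter_upwards [hYb] with q hq; simpa using hq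
  have hg : condMean μ = μ[(fun q : E × ℝ => q.2)|m'] := rfl
  have hgint : Integrable (condMean μ) μ := by rw [hg]; exact integrable_condExp
  have hφsm : StronglyMeasurable[Prod.instMeasurableSpace] φ := hφ.mono hm0
  have hφm : AEStronglyMeasurable[Prod.instMeasurableSpace] φ μ := hφsm.aestronglyMeasurable
  have hφY : Integrable (fun q : E × ℝ => φ q * q.2) μ := by
    have := hYint.bdd_mul (c := b) hφm (by filter_upwards [hb] with q hq; simpa using hq)
    exact this
  have hφg : Integrable (fun q => φ q * condMean μ q) μ := by
    have := hgint.bdd_mul (c := b) hφm (by filter_upwards [hb] with q hq; simpa using hq)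
    exact this
  have hpull : μ[(φ * fun q : E × ℝ => q.2)|m'] =ᵐ[μ] φ * μ[(fun q : E × ℝ => q.2)|m'] :=
    condExp_stronglyMeasurable_mul_of_bound hm0 hφ hYint b
      (by filter_upwards [hb] with q hq; simpa using hq)
  have hkey : ∫ q, φ q * q.2 ∂μ = ∫ q, φ q * condMean μ q ∂μ := by
    have h1 : ∫ q, (φ * fun q : E × ℝ => q.2) q ∂μ =
        ∫ q, (μ[(φ * fun q : E × ℝ => q.2)|m']) q ∂μ := (integral_condExp hm0).symm
    have h2 : ∫ q, (μ[(φ * fun q : E × ℝ => q.2)|m']) q ∂μ =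
        ∫ q, (φ * μ[(fun q : E × ℝ => q.2)|m']) q ∂μ := integral_congr_ae hpull
    rw [hg]
    exact h1.trans h2
  have hsplit : ∫ q, (q.2 - condMean μ q) * φ q ∂μ =
      (∫ q, φ q * q.2 ∂μ) - ∫ q, φ q * condMean μ q ∂μ := by
    rw [← integral_sub hφY hφg]
    congr 1
    funext q
    ring
  rw [hsplit, hkey, sub_self]

lemma aux_ssup {E : Type*} [NormedAddCommGroup E] (f : E → ℝ)
    (hrange : ∀ x, f x ∈ Set.Icc (-1 : ℝ) 1) (ε ζ : ℝ) (hζ : 0 ≤ ζ)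
    (hband : ∀ x : E, Set.Icc (f x - ζ) (f x + ζ) ⊆
      (fun Δ => f (x + Δ)) '' Metric.closedBall 0 ε) (x : E) (y : ℝ) :
    (f x - y)^2 + ζ^2 ≤ sSup ((fun Δ => (f (x + Δ) - y)^2) '' Metric.closedBall 0 ε) := by
  have hbdd : BddAbove ((fun Δ => (f (x + Δ) - y)^2) '' Metric.closedBall 0 ε) := by
    refine ⟨(1 + |y|)^2, ?_⟩
    rintro v ⟨Δ, _hΔ, rfl⟩
    have h := hrange (x + Δ)
    have habs : |f (x + Δ) - y| ≤ 1 + |y| := by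
      have h1 : |f (x + Δ)| ≤ 1 := abs_le.2 ⟨h.1, h.2⟩
      calc |f (x + Δ) - y| ≤ |f (x + Δ)| + |y| := abs_sub _ _
        _ ≤ 1 + |y| := by linarith
    calc (f (x + Δ) - y)^2 = |f (x + Δ) - y|^2 := (sq_abs _).symm
      _ ≤ (1 + |y|)^2 := by
          have h0 : (0:ℝ) ≤ |f (x + Δ) - y| := abs_nonneg _
          nlinarith
  obtain ⟨Δ₁, hΔ₁m, hΔ₁⟩ := hband x (Set.mem_Icc.2 ⟨by linarith, le_refl _⟩)
  obtain ⟨Δ₂, hΔ₂m, hΔ₂⟩ := hband x (Set.mem_Icc.2 ⟨le_refl _, by linarith⟩)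
  have s₁ : (f x + ζ - y)^2 ≤ sSup ((fun Δ => (f (x + Δ) - y)^2) '' Metric.closedBall 0 ε) := by
    refine le_csSup hbdd ⟨Δ₁, hΔ₁m, ?_⟩
    simp only
    rw [show f (x + Δ₁) = f x + ζ from hΔ₁]
  have s₂ : (f x - ζ - y)^2 ≤ sSup ((fun Δ => (f (x + Δ) - y)^2) '' Metric.closedBall 0 ε) := by
    refine le_csSup hbdd ⟨Δ₂, hΔ₂m, ?_⟩
    simp only
    rw [show f (x + Δ₂) = f x - ζ from hΔ₂]
  rcases le_or_gt y (f x) with h | h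
  · nlinarith [s₁]
  · nlinarith [s₂]

end AuxLemmas

set_option maxHeartbeats 2000000 in
/-- Under `c`-isoperimetry of the input marginal, the probability that
some `L`-Lipschitz model in a finite family `F` (each satisfying the bandwidth condition
with parameter `ζ`) attains empirical adversarial mean squared error at most `C` is
exponentially small. -/
theorem small_adv_error_probability_bound
    {E : Type*} [NormedAddCommGroup E] [MeasurableSpace E] [BorelSpace E]
    (μ : Measure (E × ℝ)) [IsProbabilityMeasure μ]
    (hlab : ∀ᵐ q ∂μ, q.2 = 1 ∨ q.2 = -1)
    (c : ℝ) (m : ℕ)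
    (hiso : ∀ (f : E → ℝ) (L' : ℝ), (∀ x₁ x₂ : E, |f x₁ - f x₂| ≤ L' * ‖x₁ - x₂‖) →
      ∀ t : ℝ, 0 < t →
        (μ.map Prod.fst) {x : E | t ≤ |f x - ∫ x', f x' ∂(μ.map Prod.fst)|} ≤
          ENNReal.ofReal (2 * Real.exp (-(m * t ^ 2 / (2 * c * L' ^ 2)))))
    (n : ℕ) (F : Finset (E → ℝ)) (L : ℝ)
    (hrange : ∀ f ∈ F, ∀ x : E, f x ∈ Set.Icc (-1 : ℝ) 1)
    (hLip : ∀ f ∈ F, ∀ x₁ x₂ : E, |f x₁ - f x₂| ≤ L * ‖x₁ - x₂‖)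
    (hmeas : ∀ f ∈ F, Measurable f)
    (ε C ζ : ℝ) (hε : 0 ≤ ε) (hC : 0 ≤ C) (hζ : 0 ≤ ζ)
    (hband : ∀ f ∈ F, ∀ x : E, Set.Icc (f x - ζ) (f x + ζ) ⊆
      (fun Δ => f (x + Δ)) '' Metric.closedBall 0 ε)
    (γ : ℝ) (hγdef : γ = condNoiseVar μ + ζ ^ 2 - C) (hγ : 0 ≤ γ) :
    (Measure.pi fun _ : Fin n => μ)
        {ω | ∃ f ∈ F, (n : ℝ)⁻¹ * ∑ i, sSup
          ((fun Δ => (f ((ω i).1 + Δ) - (ω i).2) ^ 2) '' Metric.closedBall 0 ε) ≤ C} ≤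
      ENNReal.ofReal (4 * Real.exp (-(n * γ ^ 2 / 2 ^ 9))) +
        ENNReal.ofReal (2 * F.card *
          Real.exp (-(n * m * γ ^ 2 / (2 ^ 12 * c * L ^ 2)))) := by
  classical
  -- trivial case : empty family
  rcases F.eq_empty_or_nonempty with hFe | hFne
  · subst hFe
    have : {ω : Fin n → E × ℝ | ∃ f ∈ (∅ : Finset (E → ℝ)), (n : ℝ)⁻¹ * ∑ i, sSup
        ((fun Δ => (f ((ω i).1 + Δ) - (ω i).2) ^ 2) '' Metric.closedBall 0 ε) ≤ C} = ∅ := by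
      ext ω; simp
    rw [this, measure_empty]
    exact zero_le
  haveI : IsProbabilityMeasure (Measure.pi fun _ : Fin n => μ) := by infer_instance
  -- trivial case : n = 0 or γ = 0 (first term is ≥ 1)
  by_cases hn : n = 0
  · refine le_trans prob_le_one (le_trans ?_ le_self_add)
    subst hn
    simp only [Nat.cast_zero, zero_mul, zero_div, neg_zero, Real.exp_zero, mul_one]
    exact ENNReal.one_le_ofReal.2 (by norm_num)
  by_cases hγ0 : γ = 0
  · refine le_trans prob_le_one (le_trans ?_ le_self_add)
    rw [hγ0]
    simp only [ne_eq, OfNat.ofNat_ne_zero, not_false_eq_true, zero_pow, mul_zero, zero_div,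
      neg_zero, Real.exp_zero, mul_one]
    exact ENNReal.one_le_ofReal.2 (by norm_num)
  -- trivial case : m = 0 or c * L ^ 2 ≤ 0 (second term is ≥ 1)
  by_cases hdeg : (m = 0 ∨ c * L ^ 2 ≤ 0)
  · refine le_trans prob_le_one (le_trans ?_ le_add_self)
    have hexp : (n : ℝ) * m * γ ^ 2 / (2 ^ 12 * c * L ^ 2) ≤ 0 := by
      rcases hdeg with h | h
      · simp [h]
      · rcases eq_or_lt_of_le h with h0 | h0
        · rw [show (2:ℝ)^12 * c * L^2 = 2^12 * (c * L^2) by ring, h0]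
          simp
        · apply div_nonpos_of_nonneg_of_nonpos
          · positivity
          · nlinarith
    have h1 : (1 : ℝ) ≤ Real.exp (-(↑n * ↑m * γ ^ 2 / (2 ^ 12 * c * L ^ 2))) :=
      Real.one_le_exp (by linarith)
    have hcard : (1:ℝ) ≤ (F.card : ℝ) := by
      have := Finset.card_pos.2 hFne
      exact_mod_cast this
    refine ENNReal.one_le_ofReal.2 ?_
    nlinarith
  push_neg at hdeg
  obtain ⟨hm0, hcL⟩ := hdeg
  have hmpos : 0 < (m : ℝ) := by exact_mod_cast Nat.pos_of_ne_zero hm0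
  have hnpos : 0 < (n : ℝ) := by exact_mod_cast Nat.pos_of_ne_zero hn
  have hγpos : 0 < γ := lt_of_le_of_ne hγ (Ne.symm hγ0)
  -- setup
  set ν := Measure.pi fun _ : Fin n => μ with hνd
  have hmle : (MeasurableSpace.comap (Prod.fst : E × ℝ → E) inferInstance) ≤
      (Prod.instMeasurableSpace : MeasurableSpace (E × ℝ)) :=
    measurable_fst.comap_le
  set g : E × ℝ → ℝ := condMean μ with hgd
  have hgsm : StronglyMeasurable[MeasurableSpace.comap (Prod.fst : E × ℝ → E) inferInstance] g :=
    stronglyMeasurable_condExp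
  have hgm : Measurable g :=
    (hgsm.mono hmle : StronglyMeasurable[Prod.instMeasurableSpace] g).measurable
  set z : E × ℝ → ℝ := fun q => q.2 - g q with hzd
  have hzm : Measurable z := measurable_snd.sub hgm
  set σ2 : ℝ := condNoiseVar μ with hσ2d
  have hσ2z : σ2 = ∫ q, z q ^ 2 ∂μ := rfl
  have hYb : ∀ᵐ q ∂μ, |q.2| ≤ 1 := by
    filter_upwards [hlab] with q hq
    rcases hq with h | h <;> simp [h]
  have hgb : ∀ᵐ q ∂μ, |g q| ≤ 1 := by
    have := ae_bdd_condExp_of_ae_bdd (m := MeasurableSpace.comap (Prod.fst : E × ℝ → E) inferInstance) (μ := μ) (R := 1) (f := fun q : E × ℝ => q.2)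
      (by filter_upwards [hYb] with q hq; simpa using hq)
    filter_upwards [this] with q hq
    exact hq
  have hzb : ∀ᵐ q ∂μ, |z q| ≤ 2 := by
    filter_upwards [hYb, hgb] with q h1 h2
    rw [hzd]
    calc |q.2 - g q| ≤ |q.2| + |g q| := abs_sub _ _
      _ ≤ 2 := by linarith
  have hz2int : Integrable (fun q => z q ^ 2) μ := by
    refine Integrable.mono' (integrable_const 4) (hzm.pow_const 2).aestronglyMeasurable ?_
    filter_upwards [hzb] with q hq
    rw [Real.norm_eq_abs, abs_of_nonneg (sq_nonneg _), ← sq_abs]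
    nlinarith [abs_nonneg (z q)]
  have hσ2nn : 0 ≤ σ2 := by
    rw [hσ2z]; exact integral_nonneg fun q => sq_nonneg _
  have hσ2le : σ2 ≤ 4 := by
    rw [hσ2z]
    calc ∫ q, z q ^ 2 ∂μ ≤ ∫ _q, (4:ℝ) ∂μ := by
          refine integral_mono_ae hz2int (integrable_const 4) ?_
          filter_upwards [hzb] with q hq
          rw [← sq_abs]; nlinarith [abs_nonneg (z q)]
      _ = 4 := by simp
  -- the four f-independent variables
  set X1 : E × ℝ → ℝ := fun q => σ2 - z q ^ 2 with hX1d
  set X4 : E × ℝ → ℝ := fun q => -(z q * g q) with hX4d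
  have hX1m : Measurable X1 := measurable_const.sub (hzm.pow_const 2)
  have hX4m : Measurable X4 := (hzm.mul hgm).neg
  have hX1b : ∀ᵐ q ∂μ, |X1 q| ≤ 4 := by
    filter_upwards [hzb] with q hq
    have h1 : 0 ≤ z q ^ 2 := sq_nonneg _
    have h2 : z q ^ 2 ≤ 4 := by rw [← sq_abs]; nlinarith [abs_nonneg (z q)]
    rw [hX1d, abs_le]; constructor <;> simp only <;> linarith
  have hzb2 : ∀ᵐ q ∂μ, |z q| ≤ 2 := hzb
  have hX4b : ∀ᵐ q ∂μ, |X4 q| ≤ 2 := by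
    filter_upwards [hzb, hgb] with q h1 h2
    rw [hX4d]
    simp only [abs_neg, abs_mul]
    nlinarith [abs_nonneg (z q), abs_nonneg (g q)]
  have hzmean : ∫ q, z q ∂μ = 0 := by
    have := aux_zero_integral μ hlab (fun _ => (1:ℝ)) stronglyMeasurable_const 1
      (Filter.Eventually.of_forall fun q => by norm_num)
    simpa using this
  have hzgmean : ∫ q, z q * g q ∂μ = 0 := by
    have := aux_zero_integral μ hlab g hgsm 1 hgb
    simpa using this
  have hX1mean : ∫ q, X1 q ∂μ = 0 := by
    rw [hX1d]
    rw [integral_sub (integrable_const σ2) hz2int, integral_const, ← hσ2z]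
    simp
  have hX4mean : ∫ q, X4 q ∂μ = 0 := by
    rw [hX4d, integral_neg, hzgmean, neg_zero]
  have hzint : Integrable z μ := by
    refine Integrable.mono' (integrable_const 2) hzm.aestronglyMeasurable ?_
    filter_upwards [hzb] with q hq; simpa using hq
  have hnzmean : ∫ q, -(z q) ∂μ = 0 := by rw [integral_neg, hzmean, neg_zero]
  -- expressions for the bounds
  set e₁ : ℝ := Real.exp (-(↑n * γ ^ 2 / 2 ^ 9)) with he₁d
  set e₂ : ℝ := Real.exp (-(↑n * ↑m * γ ^ 2 / (2 ^ 12 * c * L ^ 2))) with he₂d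
  -- Chernoff bounds for the four f-free events
  have hA1 : ν {ω | (n:ℝ) * γ / 4 ≤ ∑ i, X1 (ω i)} ≤ ENNReal.ofReal e₁ := by
    have hmgf := aux_mgf_bounded μ X1 hX1m 4 hX1b hX1mean (γ/64)
    have h := aux_chernoff_pi μ n X1 hX1m 4 hX1b (γ/64)
      (Real.exp ((γ/64)^2 * 4^2 / 2)) ((n:ℝ)*γ/4) (by positivity) hmgf
    refine h.trans (le_of_eq ?_)
    congr 1
    rw [← Real.exp_nat_mul, ← Real.exp_add, he₁d]
    congr 1
    push_cast
    ring
  have hA2 : ν {ω | (n:ℝ) * γ / 8 ≤ ∑ i, z (ω i)} ≤ ENNReal.ofReal e₁ := by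
    have hmgf := aux_mgf_bounded μ z hzm 2 hzb hzmean (γ/32)
    have h := aux_chernoff_pi μ n z hzm 2 hzb (γ/32)
      (Real.exp ((γ/32)^2 * 2^2 / 2)) ((n:ℝ)*γ/8) (by positivity) hmgf
    refine h.trans (le_of_eq ?_)
    congr 1
    rw [← Real.exp_nat_mul, ← Real.exp_add, he₁d]
    congr 1
    push_cast
    ring
  have hA3 : ν {ω | (n:ℝ) * γ / 8 ≤ ∑ i, (fun q => -(z q)) (ω i)} ≤ ENNReal.ofReal e₁ := by
    have hnb : ∀ᵐ q ∂μ, |(fun q => -(z q)) q| ≤ 2 := by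
      filter_upwards [hzb] with q hq; simpa using hq
    have hmgf := aux_mgf_bounded μ (fun q => -(z q)) hzm.neg 2 hnb hnzmean (γ/32)
    have h := aux_chernoff_pi μ n (fun q => -(z q)) hzm.neg 2 hnb (γ/32)
      (Real.exp ((γ/32)^2 * 2^2 / 2)) ((n:ℝ)*γ/8) (by positivity) hmgf
    refine h.trans (le_of_eq ?_)
    congr 1
    rw [← Real.exp_nat_mul, ← Real.exp_add, he₁d]
    congr 1
    push_cast
    ring
  have hA4 : ν {ω | (n:ℝ) * γ / 8 ≤ ∑ i, X4 (ω i)} ≤ ENNReal.ofReal e₁ := by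
    have hmgf := aux_mgf_bounded μ X4 hX4m 2 hX4b hX4mean (γ/32)
    have h := aux_chernoff_pi μ n X4 hX4m 2 hX4b (γ/32)
      (Real.exp ((γ/32)^2 * 2^2 / 2)) ((n:ℝ)*γ/8) (by positivity) hmgf
    refine h.trans (le_of_eq ?_)
    congr 1
    rw [← Real.exp_nat_mul, ← Real.exp_add, he₁d]
    congr 1
    push_cast
    ring
    -- per-model quantities
  have hcL4 : (0:ℝ) < 4 * c * L^2 / m := by
    apply div_pos (by nlinarith) hmpos
  set s : ℝ := Real.sqrt (4 * c * L^2 / m) with hsd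
  have hs2 : s^2 = 4 * c * L^2 / m := Real.sq_sqrt hcL4.le
  have hspos : 0 < s := Real.sqrt_pos.2 hcL4
  have hLne : L^2 ≠ 0 := by
    intro h; rw [h, mul_zero] at hcL; exact lt_irrefl _ hcL
  have hcne : c ≠ 0 := by
    intro h; rw [h, zero_mul] at hcL; exact lt_irrefl _ hcL
  have hIfb : ∀ f ∈ F, |∫ x', f x' ∂(μ.map Prod.fst)| ≤ 1 := by
    intro f hfF
    haveI : IsProbabilityMeasure (μ.map (Prod.fst : E × ℝ → E)) :=
      Measure.isProbabilityMeasure_map measurable_fst.aemeasurable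
    have h1 := norm_integral_le_of_norm_le_const (μ := μ.map (Prod.fst : E × ℝ → E)) (f := f)
      (C := 1) (Filter.Eventually.of_forall fun x => by
        rw [Real.norm_eq_abs]; exact abs_le.2 ⟨(hrange f hfF x).1, (hrange f hfF x).2⟩)
    simpa using h1
  -- the per-model bad event bound
  have hBf : ∀ f ∈ F,
      ν {ω : Fin n → E × ℝ | (n:ℝ) * γ / 8 ≤
        ∑ i, (z (ω i) * (f (ω i).1 - ∫ x', f x' ∂(μ.map Prod.fst)))} ≤ ENNReal.ofReal e₂ := by
    intro f hfF
    set If : ℝ := ∫ x', f x' ∂(μ.map Prod.fst) with hIfd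
    set Q : E × ℝ → ℝ := fun q => z q * (f q.1 - If) with hQd
    have hfm : Measurable f := hmeas f hfF
    have hIfb' : |If| ≤ 1 := hIfb f hfF
    have hfb : ∀ q : E × ℝ, |f q.1 - If| ≤ 2 := by
      intro q
      have h := abs_le.2 ⟨(hrange f hfF q.1).1, (hrange f hfF q.1).2⟩
      calc |f q.1 - If| ≤ |f q.1| + |If| := abs_sub _ _
        _ ≤ 2 := by linarith
    have hQm : Measurable Q := hzm.mul ((hfm.comp measurable_fst).sub measurable_const)
    have hQb : ∀ᵐ q ∂μ, |Q q| ≤ 4 := by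
      filter_upwards [hzb] with q hq
      rw [hQd]
      simp only [abs_mul]
      nlinarith [abs_nonneg (z q), abs_nonneg (f q.1 - If), hfb q]
    have hφsm : StronglyMeasurable[MeasurableSpace.comap (Prod.fst : E × ℝ → E) inferInstance]
        (fun q : E × ℝ => f q.1 - If) := by
      have h1 : Measurable[MeasurableSpace.comap (Prod.fst : E × ℝ → E) inferInstance]
          (fun q : E × ℝ => f q.1) := fun sset hsset => ⟨f ⁻¹' sset, hfm hsset, rfl⟩
      exact (h1.sub measurable_const).stronglyMeasurable
    have hQmean : ∫ q, Q q ∂μ = 0 :=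
      aux_zero_integral μ hlab (fun q => f q.1 - If) hφsm 2
        (Filter.Eventually.of_forall hfb)
    have htail : ∀ t : ℝ, 0 < t →
        μ {p | t ≤ |Q p|} ≤ ENNReal.ofReal (2 * Real.exp (-(t^2/(2*s^2)))) := by
      intro t ht
      have hsub2 : {p : E × ℝ | t ≤ |Q p|} ⊆
          (Prod.fst ⁻¹' {x : E | t/2 ≤ |f x - If|}) ∪ {p : E × ℝ | ¬ |z p| ≤ 2} := by
        intro p hp
        by_cases hz2 : |z p| ≤ 2
        · left
          simp only [Set.mem_setOf_eq, Set.mem_preimage] at hp ⊢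
          have habs : |Q p| = |z p| * |f p.1 - If| := by rw [hQd]; exact abs_mul _ _
          nlinarith [abs_nonneg (f p.1 - If), abs_nonneg (z p)]
        · right; exact hz2
      have hznull : μ {p : E × ℝ | ¬ |z p| ≤ 2} = 0 := hzb
      have hmsb : MeasurableSet {x : E | t/2 ≤ |f x - If|} :=
        measurableSet_le measurable_const (hfm.sub measurable_const).abs
      calc μ {p | t ≤ |Q p|}
          ≤ μ (Prod.fst ⁻¹' {x : E | t/2 ≤ |f x - If|}) + μ {p : E × ℝ | ¬ |z p| ≤ 2} :=
            le_trans (measure_mono hsub2) (measure_union_le _ _)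
        _ = (μ.map Prod.fst) {x : E | t/2 ≤ |f x - If|} := by
            rw [hznull, add_zero, Measure.map_apply measurable_fst hmsb]
        _ ≤ ENNReal.ofReal (2 * Real.exp (-(↑m * (t/2)^2 / (2 * c * L^2)))) := by
            rw [hIfd]
            exact hiso f L (hLip f hfF) (t/2) (by linarith)
        _ = ENNReal.ofReal (2 * Real.exp (-(t^2/(2*s^2)))) := by
            congr 3
            rw [hs2]
            field_simp
            ring
    have hmgf := aux_mgf_subgaussian μ Q hQm 4 hQb hQmean s hspos htail (γ/(64*s^2))
      (by positivity)
    have h := aux_chernoff_pi μ n Q hQm 4 hQb (γ/(64*s^2))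
      (Real.exp (4 * (γ/(64*s^2))^2 * s^2)) ((n:ℝ)*γ/8) (by positivity) hmgf
    refine le_trans (le_of_eq rfl) (h.trans (le_of_eq ?_))
    congr 1
    rw [← Real.exp_nat_mul, ← Real.exp_add, he₂d]
    congr 1
    rw [hs2]
    field_simp
    ring
  -- event inclusion
  have hincl : {ω : Fin n → E × ℝ | ∃ f ∈ F, (n : ℝ)⁻¹ * ∑ i, sSup
        ((fun Δ => (f ((ω i).1 + Δ) - (ω i).2) ^ 2) '' Metric.closedBall 0 ε) ≤ C} ⊆
      {ω : Fin n → E × ℝ | (n:ℝ) * γ / 4 ≤ ∑ i, X1 (ω i)}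
      ∪ {ω : Fin n → E × ℝ | (n:ℝ) * γ / 8 ≤ ∑ i, z (ω i)}
      ∪ {ω : Fin n → E × ℝ | (n:ℝ) * γ / 8 ≤ ∑ i, (fun q => -(z q)) (ω i)}
      ∪ {ω : Fin n → E × ℝ | (n:ℝ) * γ / 8 ≤ ∑ i, X4 (ω i)}
      ∪ ⋃ f ∈ F, {ω : Fin n → E × ℝ | (n:ℝ) * γ / 8 ≤
          ∑ i, (z (ω i) * (f (ω i).1 - ∫ x', f x' ∂(μ.map Prod.fst)))} := by
    intro ω hω
    obtain ⟨f, hfF, hle⟩ := hω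
    simp only [Set.mem_union, Set.mem_setOf_eq, Set.mem_iUnion]
    by_cases h1 : (n:ℝ) * γ / 4 ≤ ∑ i, X1 (ω i)
    · tauto
    by_cases h2 : (n:ℝ) * γ / 8 ≤ ∑ i, z (ω i)
    · tauto
    by_cases h3 : (n:ℝ) * γ / 8 ≤ ∑ i, -(z (ω i))
    · tauto
    by_cases h4 : (n:ℝ) * γ / 8 ≤ ∑ i, X4 (ω i)
    · tauto
    right
    refine ⟨f, hfF, ?_⟩
    push_neg at h1 h2 h3 h4
    set If : ℝ := ∫ x', f x' ∂(μ.map Prod.fst) with hIfd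
    have hlow : ∀ i : Fin n, (f (ω i).1 - (ω i).2)^2 + ζ^2 ≤ sSup
        ((fun Δ => (f ((ω i).1 + Δ) - (ω i).2) ^ 2) '' Metric.closedBall 0 ε) := fun i =>
      aux_ssup f (hrange f hfF) ε ζ hζ (hband f hfF) _ _
    have hsum0 : ∑ i, ((f (ω i).1 - (ω i).2)^2 + ζ^2) ≤ (n:ℝ) * C := by
      have h5 := Finset.sum_le_sum (fun i (_ : i ∈ Finset.univ) => hlow i)
      have h7 := mul_le_mul_of_nonneg_left hle (le_of_lt hnpos)
      rw [← mul_assoc, mul_inv_cancel₀ hnpos.ne', one_mul] at h7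
      linarith
    rw [Finset.sum_add_distrib, Finset.sum_const, Finset.card_univ, Fintype.card_fin,
      nsmul_eq_mul] at hsum0
    have hpt : ∀ i : Fin n, z (ω i)^2 - 2 * (z (ω i) * (f (ω i).1 - If))
        - 2 * If * z (ω i) + 2 * (z (ω i) * g (ω i)) ≤ (f (ω i).1 - (ω i).2)^2 := by
      intro i
      have hzi : z (ω i) = (ω i).2 - g (ω i) := rfl
      rw [hzi]
      nlinarith [sq_nonneg (f (ω i).1 - g (ω i))]
    have hsumpt := Finset.sum_le_sum (fun i (_ : i ∈ Finset.univ) => hpt i)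
    have hdist : ∑ i, (z (ω i)^2 - 2 * (z (ω i) * (f (ω i).1 - If))
        - 2 * If * z (ω i) + 2 * (z (ω i) * g (ω i)))
        = (∑ i, z (ω i)^2) - 2 * (∑ i, (z (ω i) * (f (ω i).1 - If)))
          - 2 * If * (∑ i, z (ω i)) + 2 * (∑ i, (z (ω i) * g (ω i))) := by
      rw [Finset.sum_add_distrib, Finset.sum_sub_distrib, Finset.sum_sub_distrib,
        ← Finset.mul_sum, ← Finset.mul_sum, ← Finset.mul_sum]
    have hX1e : ∑ i, X1 (ω i) = (n:ℝ) * σ2 - ∑ i, z (ω i)^2 := by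
      rw [hX1d]
      rw [Finset.sum_sub_distrib, Finset.sum_const, Finset.card_univ, Fintype.card_fin,
        nsmul_eq_mul]
    have hX1s' : (n:ℝ) * σ2 - (n:ℝ)*γ/4 < ∑ i, z (ω i)^2 := by
      rw [hX1e] at h1; linarith
    have hz3 : -(∑ i, z (ω i)) < (n:ℝ)*γ/8 := by
      have e : ∑ i, -(z (ω i)) = -∑ i, z (ω i) := by
        rw [Finset.sum_neg_distrib]
      linarith [h3, e.symm.trans_lt h3]
    have hzg : -(∑ i, (z (ω i) * g (ω i))) < (n:ℝ)*γ/8 := by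
      have e : ∑ i, X4 (ω i) = -∑ i, (z (ω i) * g (ω i)) := by
        rw [hX4d, Finset.sum_neg_distrib]
      rw [e] at h4; exact h4
    have hIfz : If * (∑ i, z (ω i)) ≤ (n:ℝ)*γ/8 := by
      have habs : |∑ i, z (ω i)| ≤ (n:ℝ)*γ/8 := abs_le.2 ⟨by linarith, by linarith⟩
      calc If * (∑ i, z (ω i)) ≤ |If * (∑ i, z (ω i))| := le_abs_self _
        _ = |If| * |∑ i, z (ω i)| := abs_mul _ _
        _ ≤ 1 * ((n:ℝ)*γ/8) := mul_le_mul (hIfb f hfF) habs (abs_nonneg _) (by norm_num)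
        _ = (n:ℝ)*γ/8 := one_mul _
    have hnC : (n:ℝ) * C = (n:ℝ)*σ2 + (n:ℝ)*ζ^2 - (n:ℝ)*γ := by
      have hC : C = σ2 + ζ^2 - γ := by rw [hσ2d]; linarith [hγdef]
      rw [hC]; ring
    linarith [hsumpt, hdist, hsum0, hX1s', hzg, hIfz, hnC]
  -- put everything together
  refine le_trans (measure_mono hincl) ?_
  set SA := {ω : Fin n → E × ℝ | (n:ℝ) * γ / 4 ≤ ∑ i, X1 (ω i)} with hSAd
  set SB := {ω : Fin n → E × ℝ | (n:ℝ) * γ / 8 ≤ ∑ i, z (ω i)} with hSBd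
  set SC := {ω : Fin n → E × ℝ | (n:ℝ) * γ / 8 ≤ ∑ i, (fun q => -(z q)) (ω i)} with hSCd
  set SD := {ω : Fin n → E × ℝ | (n:ℝ) * γ / 8 ≤ ∑ i, X4 (ω i)} with hSDd
  set SU := ⋃ f ∈ F, {ω : Fin n → E × ℝ | (n:ℝ) * γ / 8 ≤
      ∑ i, (z (ω i) * (f (ω i).1 - ∫ x', f x' ∂(μ.map Prod.fst)))} with hSUd
  have hU : ν SU ≤ ∑ _f ∈ F, ENNReal.ofReal e₂ := by
    rw [hSUd]
    refine le_trans (measure_biUnion_finset_le F _) ?_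
    exact Finset.sum_le_sum fun f hf => hBf f hf
  have hsum4 : ENNReal.ofReal e₁ + ENNReal.ofReal e₁ + ENNReal.ofReal e₁ + ENNReal.ofReal e₁
      = ENNReal.ofReal (4 * e₁) := by
    rw [← ENNReal.ofReal_add (by positivity) (by positivity),
        ← ENNReal.ofReal_add (by positivity) (by positivity),
        ← ENNReal.ofReal_add (by positivity) (by positivity)]
    congr 1; ring
  have hsumF : (∑ _f ∈ F, ENNReal.ofReal e₂) ≤ ENNReal.ofReal (2 * F.card * e₂) := by
    rw [Finset.sum_const, nsmul_eq_mul]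
    have h1 : (F.card : ℝ≥0∞) = ENNReal.ofReal (F.card : ℝ) := by
      rw [ENNReal.ofReal_natCast]
    rw [h1, ← ENNReal.ofReal_mul (Nat.cast_nonneg _)]
    refine ENNReal.ofReal_le_ofReal ?_
    have he₂0 : 0 ≤ e₂ := Real.exp_nonneg _
    nlinarith [Nat.cast_nonneg (α := ℝ) F.card]
  calc ν (SA ∪ SB ∪ SC ∪ SD ∪ SU) ≤ ν (SA ∪ SB ∪ SC ∪ SD) + ν SU := measure_union_le _ _
    _ ≤ (ν (SA ∪ SB ∪ SC) + ν SD) + ν SU := add_le_add_left (measure_union_le _ _) _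
    _ ≤ ((ν (SA ∪ SB) + ν SC) + ν SD) + ν SU :=
        add_le_add_left (add_le_add_left (measure_union_le _ _) _) _
    _ ≤ (((ν SA + ν SB) + ν SC) + ν SD) + ν SU :=
        add_le_add_left (add_le_add_left (add_le_add_left (measure_union_le _ _) _) _) _
    _ ≤ (((ENNReal.ofReal e₁ + ENNReal.ofReal e₁) + ENNReal.ofReal e₁) + ENNReal.ofReal e₁)
        + ∑ _f ∈ F, ENNReal.ofReal e₂ :=
        add_le_add (add_le_add (add_le_add (add_le_add hA1 hA2) hA3) hA4) hU
    _ ≤ ENNReal.ofReal (4 * e₁) + ENNReal.ofReal (2 * F.card * e₂) := by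
        rw [← hsum4]
        exact add_le_add le_rfl hsumF
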